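/- For every n ≥ 2 there exist an axis-aligned 2n-gon P : ℤ/2n → ℝ² and a parallel lifting L(i,j) ∈ ℝⁿ (for 0 ≤ i ≤ n−2, 0 ≤ j ≤ n−1) of the sequences A_i(j) = P(i + 2j) — meaning that the first two coordinates of L(i,j) are the coordinates of P(i+2j) and for every j the last n−2 coordinates of L(i,j) are independent of i — such that the affine spans |Ã_i| = affineSpan{L(i,0), …, L(i,n−1)} are hyperplanes of ℝⁿ in general position: for every nonempty subset S ⊆ {0, …, n−2}, the intersection ⋂_{i ∈ S} |Ã_i| is an affine subspace of ℝⁿ of dimension n − |S| (in particular each |Ã_i| has dimension n − 1). -/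

import Mathlib

/-!
Take the polygon with vertices `P(2m) = (x_m, y_m)` and `P(2m+1) = (x_{m+1}, y_m)`, where
`x_m = m mod n` and `y_m = (m + ⌈n/2⌉) mod n`, and lift the `j`-th point of every sequence to the
staircase height `(1, …, 1, 0, …, 0)` with `j - 1` ones. The `i`-th lifted sequence spans a
hyperplane whose normal is a combination, with nonzero coefficients, of two "letters": the
`x`-letter at `⌈i/2⌉` and the `y`-letter at `⌊i/2⌋`. These are consecutive in the path
`x₀, y₀, x₁, y₁, …`, so the `n - 1` normals are independent as soon as the `n` letters are. The
height coordinates of a letter are `-1` except for one spike of size `n`, placed according to the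
residue of the letter, and the shift `⌈n/2⌉` makes the residues of the `n` letters distinct; this
gives their independence. Finally, hyperplanes with independent normals are in general position.
-/

/-- An axis-aligned `2n`-gon: the edge `P(i+1) - P(i)` is horizontal when `i` is even
and vertical when `i` is odd. -/
def IsAxisAligned2 (n : ℕ) (P : ZMod (2 * n) → (Fin 2 → ℝ)) : Prop :=
  ∀ i : ZMod (2 * n),
    (Even i.val → (P (i + 1) - P i) 1 = 0) ∧
    (¬ Even i.val → (P (i + 1) - P i) 0 = 0)

open Module Matrix

section LinearAlgebra

variable {K : Type*} [Field K]

theorem linearIndepOn_range_of_bidiagonal {V : Type*} [AddCommGroup V] [Module K V]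
    {u w : ℕ → V} : ∀ {m : ℕ},
    LinearIndepOn K u (Finset.range (m + 1) : Set ℕ) →
    (∀ i < m, ∃ a b : K, b ≠ 0 ∧ w i = a • u i + b • u (i + 1)) →
    LinearIndepOn K w (Finset.range m : Set ℕ)
  | 0, _, _ => by simp
  | m + 1, hu, hw => by
    have hu' := hu
    rw [Finset.range_add_one, Finset.coe_insert, linearIndepOn_insert (by simp)] at hu' ⊢
    refine ⟨linearIndepOn_range_of_bidiagonal hu'.1 fun i hi => hw i (by omega), fun hmem => ?_⟩
    have hspan : Submodule.span K (w '' (Finset.range m : Set ℕ)) ≤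
        Submodule.span K (u '' (Finset.range (m + 1) : Set ℕ)) := by
      refine Submodule.span_le.mpr ?_
      rintro _ ⟨i, hi, rfl⟩
      obtain ⟨a, b, -, hwi⟩ := hw i (by simp at hi; omega)
      rw [hwi]
      exact add_mem
        (Submodule.smul_mem _ _ (Submodule.subset_span ⟨i, by simp at hi ⊢; omega, rfl⟩))
        (Submodule.smul_mem _ _ (Submodule.subset_span ⟨i + 1, by simp at hi ⊢; omega, rfl⟩))
    obtain ⟨a, b, hb, hwm⟩ := hw m (by omega)
    refine hu'.2 ?_
    have hum : u m ∈ Submodule.span K (u '' (Finset.range (m + 1) : Set ℕ)) :=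
      Submodule.subset_span ⟨m, by simp, rfl⟩
    rw [show u (m + 1) = b⁻¹ • (w m - a • u m) by rw [hwm]; simp [smul_smul, hb]]
    exact Submodule.smul_mem _ _ (sub_mem (hspan hmem) (Submodule.smul_mem _ _ hum))

theorem linearIndependent_finCons_of_map_eq_single {V : Type*} [AddCommGroup V] [Module K V]
    {m : ℕ} {f : V →ₗ[K] Fin m → K} {x : V} {v : Fin m → V}
    (hv : ∀ r, f (v r) = Pi.single r 1) (hx : x ≠ 0) (hfx : f x = 0) :
    LinearIndependent K (Fin.cons x v : Fin (m + 1) → V) := by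
  have hfv : LinearIndependent K (f ∘ v) := by
    rw [show f ∘ v = Pi.basisFun K (Fin m) from funext fun r => by simp [hv]]
    exact (Pi.basisFun K (Fin m)).linearIndependent
  refine linearIndependent_finCons.mpr ⟨hfv.of_comp, fun hmem => hx ?_⟩
  obtain ⟨c, rfl⟩ := (Submodule.mem_span_range_iff_exists_fun K).mp hmem
  have hc : ∀ r, c r = 0 := Fintype.linearIndependent_iff.mp hfv c (by simpa [map_sum] using hfx)
  simp [hc]

theorem coe_affineSpan_eq_setOf_dotProduct {ι κ m : Type*} [Fintype κ] [Fintype m]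
    [DecidableEq m] {q : ι → m → K} {j₀ : ι} {v : m → K} (hv : v ≠ 0)
    (hq : ∀ j, v ⬝ᵥ q j = v ⬝ᵥ q j₀) {d : κ → m → K} (hd : LinearIndependent K d)
    (hdq : ∀ r, d r ∈ vectorSpan K (Set.range q)) (hκ : Fintype.card κ + 1 = Fintype.card m) :
    (affineSpan K (Set.range q) : Set (m → K)) = {z | v ⬝ᵥ z = v ⬝ᵥ q j₀} := by
  set φ := dotProductEquiv K m v
  have hle : vectorSpan K (Set.range q) ≤ LinearMap.ker φ := by
    rw [vectorSpan_def, Submodule.span_le]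
    rintro _ ⟨_, ⟨a, rfl⟩, _, ⟨b, rfl⟩, rfl⟩
    simp [φ, dotProduct_sub, hq]
  have hlt : finrank K (LinearMap.ker φ) < Fintype.card m := by
    rw [← finrank_fintype_fun_eq_card (R := K)]
    refine Submodule.finrank_lt fun htop => hv ?_
    exact (dotProductEquiv K m).map_eq_zero_iff.mp (LinearMap.ker_eq_top.mp htop)
  have hdle : Submodule.span K (Set.range d) ≤ vectorSpan K (Set.range q) :=
    Submodule.span_le.mpr (Set.range_subset_iff.mpr hdq)
  have hker : Submodule.span K (Set.range d) = LinearMap.ker φ := by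
    refine Submodule.eq_of_le_of_finrank_eq (hdle.trans hle) ?_
    have := Submodule.finrank_mono (hdle.trans hle)
    rw [finrank_span_eq_card hd] at this ⊢
    omega
  rw [← AffineSubspace.mk'_eq (mem_affineSpan K (Set.mem_range_self j₀)), direction_affineSpan,
    le_antisymm hle (hker ▸ hdle)]
  ext z
  simp [AffineSubspace.mem_mk', φ, dotProduct_sub, sub_eq_zero]

theorem nonempty_and_finrank_direction_biInf {ι m : Type*} [Fintype m] {v : ι → m → K}
    {c : ι → K} {S : Finset ι} (hv : LinearIndepOn K v (S : Set ι))
    {A : ι → AffineSubspace K (m → K)}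
    (hA : ∀ i ∈ S, (A i : Set (m → K)) = {z | v i ⬝ᵥ z = c i}) :
    ((⨅ i ∈ S, A i : AffineSubspace K (m → K)) : Set (m → K)).Nonempty ∧
      finrank K (⨅ i ∈ S, A i).direction = Fintype.card m - S.card := by
  set Φ := (Matrix.of fun (i : S) t => v i t).mulVecLin
  have hrange : LinearMap.range Φ = ⊤ := by
    rw [Matrix.range_mulVecLin]
    exact span_flip_eq_top_iff_linearIndependent.mpr hv
  obtain ⟨x₀, hx₀⟩ : ∃ x₀, Φ x₀ = fun i : S => c i := LinearMap.range_eq_top.mp hrange _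
  have hinf : ⨅ i ∈ S, A i = AffineSubspace.mk' x₀ (LinearMap.ker Φ) := by
    ext z
    simp only [AffineSubspace.mem_iInf_iff, AffineSubspace.mem_mk', LinearMap.mem_ker, vsub_eq_sub,
      map_sub, sub_eq_zero, hx₀]
    rw [funext_iff, Subtype.forall]
    refine forall₂_congr fun i hi => ?_
    rw [← SetLike.mem_coe, hA i hi]
    rfl
  refine ⟨hinf ▸ ⟨x₀, AffineSubspace.self_mem_mk' _ _⟩, ?_⟩
  have := LinearMap.finrank_range_add_finrank_ker Φ
  rw [hrange, finrank_top, finrank_fintype_fun_eq_card, finrank_fintype_fun_eq_card,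
    Fintype.card_coe] at this
  rw [hinf, AffineSubspace.direction_mk']
  omega

end LinearAlgebra

namespace AxisAlignedLifting

def polygon (n : ℕ) (X Y : ℕ → ℝ) : ZMod (2 * n) → Fin 2 → ℝ :=
  fun p => ![X ((p.val + 1) / 2), Y (p.val / 2)]

theorem isAxisAligned2_polygon {n : ℕ} [NeZero n] {X : ℕ → ℝ} (hX : Function.Periodic X n)
    (Y : ℕ → ℝ) : IsAxisAligned2 n (polygon n X Y) := by
  intro p
  have hp : p.val < 2 * n := ZMod.val_lt p
  have hsucc : (p + 1).val = (p.val + 1) % (2 * n) := by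
    rw [← ZMod.val_natCast, Nat.cast_add, ZMod.natCast_val, ZMod.cast_id', id, Nat.cast_one]
  refine ⟨fun heven => ?_, fun hodd => ?_⟩
  · obtain ⟨r, hr⟩ := heven
    simp only [polygon, hsucc, Nat.mod_eq_of_lt (show p.val + 1 < 2 * n by omega)]
    simp [show (p.val + 1) / 2 = p.val / 2 by omega]
  · obtain ⟨r, hr⟩ := Nat.not_even_iff_odd.mp hodd
    simp only [polygon, hsucc]
    rcases Nat.lt_or_ge (p.val + 1) (2 * n) with hlt | hge
    · rw [Nat.mod_eq_of_lt hlt]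
      simp [show (p.val + 1 + 1) / 2 = (p.val + 1) / 2 by omega]
    · rw [show p.val + 1 = 2 * n by omega, Nat.mod_self]
      simp [hX.eq]

theorem polygon_natCast {n : ℕ} [NeZero n] {X Y : ℕ → ℝ} (hX : Function.Periodic X n)
    (hY : Function.Periodic Y n) (m : ℕ) :
    polygon n X Y m = ![X ((m + 1) / 2), Y (m / 2)] := by
  have hm := Nat.mod_add_div m (2 * n)
  rw [show 2 * n * (m / (2 * n)) = 2 * (m / (2 * n) * n) by ring] at hm
  have hXq := hX.nat_mul (m / (2 * n))
  have hYq := hY.nat_mul (m / (2 * n))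
  simp only [Nat.cast_id] at hXq hYq
  generalize m / (2 * n) * n = t at *
  simp only [polygon, ZMod.val_natCast]
  rw [← hXq, ← hYq, show (m % (2 * n) + 1) / 2 + t = (m + 1) / 2 by omega,
    show m % (2 * n) / 2 + t = m / 2 by omega]

-- The ambient space is `Fin (k + 2) → ℝ`, i.e. `n = k + 2`: coordinates `0` and `1` are the
-- plane, and coordinate `t.succ.succ` is the `t`-th lifting height.
variable (k : ℕ)

def stair (j : ℕ) : Fin k → ℝ := fun t => if (t : ℕ) + 2 ≤ j then 1 else 0

def lift (X Y : ℕ → ℝ) (ξ η j : ℕ) : Fin (k + 2) → ℝ :=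
  vecCons (X (ξ + j)) (vecCons (Y (η + j)) (stair k j))

def slopes (Z : ℕ → ℝ) (ξ : ℕ) : Fin k → ℝ := fun t => Z (ξ + t + 1) - Z (ξ + t + 2)

def xLetter (Z : ℕ → ℝ) (ξ : ℕ) : Fin (k + 2) → ℝ := vecCons 1 (vecCons 0 (slopes k Z ξ))

def yLetter (Z : ℕ → ℝ) (η : ℕ) : Fin (k + 2) → ℝ := vecCons 0 (vecCons 1 (slopes k Z η))

def normal (X Y : ℕ → ℝ) (ξ η : ℕ) : Fin (k + 2) → ℝ :=
  (Y (η + 1) - Y η) • xLetter k X ξ - (X (ξ + 1) - X ξ) • yLetter k Y η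

def letter (X Y : ℕ → ℝ) (p : ℕ) : Fin (k + 2) → ℝ :=
  if p % 2 = 0 then xLetter k X (p / 2) else yLetter k Y (p / 2)

variable {k}

theorem stair_eq_zero {j : ℕ} (hj : j ≤ 1) : stair k j = 0 :=
  funext fun _ => if_neg (by omega)

theorem slopes_dotProduct_stair (Z : ℕ → ℝ) (ξ : ℕ) {j : ℕ} (hj : 1 ≤ j) (hjk : j ≤ k + 1) :
    slopes k Z ξ ⬝ᵥ stair k j = Z (ξ + 1) - Z (ξ + j) := by
  have hrange : (Finset.range k).filter (fun t => t + 2 ≤ j) = Finset.range (j - 1) := by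
    ext t; simp; omega
  simp only [dotProduct, slopes, stair, mul_ite, mul_one, mul_zero]
  rw [Fin.sum_univ_eq_sum_range (fun t => if t + 2 ≤ j then Z (ξ + t + 1) - Z (ξ + t + 2) else 0),
    ← Finset.sum_filter, hrange]
  have := Finset.sum_range_sub' (fun t => Z (ξ + 1 + t)) (j - 1)
  simp only [add_assoc] at this ⊢
  rw [show 1 + (j - 1) = j by omega] at this
  simpa [add_comm 1] using this

theorem xLetter_dotProduct_lift (X Y : ℕ → ℝ) (ξ η : ℕ) {j : ℕ} (hj : 1 ≤ j) (hjk : j ≤ k + 1) :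
    xLetter k X ξ ⬝ᵥ lift k X Y ξ η j = X (ξ + 1) := by
  simp [xLetter, lift, slopes_dotProduct_stair X ξ hj hjk]

theorem yLetter_dotProduct_lift (X Y : ℕ → ℝ) (ξ η : ℕ) {j : ℕ} (hj : 1 ≤ j) (hjk : j ≤ k + 1) :
    yLetter k Y η ⬝ᵥ lift k X Y ξ η j = Y (η + 1) := by
  simp [yLetter, lift, slopes_dotProduct_stair Y η hj hjk]

theorem normal_dotProduct_lift (X Y : ℕ → ℝ) (ξ η : ℕ) {j : ℕ} (hjk : j ≤ k + 1) :
    normal k X Y ξ η ⬝ᵥ lift k X Y ξ η j = normal k X Y ξ η ⬝ᵥ lift k X Y ξ η 0 := by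
  rcases Nat.eq_zero_or_pos j with rfl | hj
  · rfl
  simp only [normal, sub_dotProduct, smul_dotProduct, smul_eq_mul,
    xLetter_dotProduct_lift X Y ξ η hj hjk, yLetter_dotProduct_lift X Y ξ η hj hjk]
  simp [xLetter, yLetter, lift, stair_eq_zero]
  ring

theorem normal_ne_zero {X : ℕ → ℝ} (Y : ℕ → ℝ) {ξ : ℕ} (η : ℕ) (hX : X (ξ + 1) ≠ X ξ) :
    normal k X Y ξ η ≠ 0 := fun h => hX <| by
  have := congrFun h 1
  simp [normal, xLetter, yLetter] at this
  linarith

theorem linearIndependent_lift_sub (X Y : ℕ → ℝ) (ξ η : ℕ) (hX : X (ξ + 1) ≠ X ξ) :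
    LinearIndependent ℝ fun r : Fin (k + 1) => lift k X Y ξ η (r + 1) - lift k X Y ξ η r := by
  rw [← Fin.cons_self_tail fun r : Fin (k + 1) => lift k X Y ξ η (r + 1) - lift k X Y ξ η r]
  refine linearIndependent_finCons_of_map_eq_single
    (f := LinearMap.funLeft ℝ ℝ (Fin.succ ∘ Fin.succ)) (fun r => ?_) (fun h => ?_) ?_
  · funext t
    simp [Fin.tail, lift, stair, Pi.single_apply, Fin.ext_iff]
    split_ifs <;> simp only [Fin.le_def, Fin.lt_def] at * <;> first | omega | norm_num
  · have := congrFun h 0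
    simp [lift] at this
    exact hX (sub_eq_zero.mp this)
  · ext t
    simp [lift, stair]

theorem coe_affineSpan_lift {X : ℕ → ℝ} (Y : ℕ → ℝ) {ξ : ℕ} (η : ℕ) (hX : X (ξ + 1) ≠ X ξ) :
    (affineSpan ℝ (Set.range fun j : Fin (k + 2) => lift k X Y ξ η j) : Set (Fin (k + 2) → ℝ)) =
      {z | normal k X Y ξ η ⬝ᵥ z = normal k X Y ξ η ⬝ᵥ lift k X Y ξ η 0} :=
  coe_affineSpan_eq_setOf_dotProduct (j₀ := 0) (normal_ne_zero Y η hX)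
    (fun j => normal_dotProduct_lift X Y ξ η (by omega)) (linearIndependent_lift_sub X Y ξ η hX)
    (fun r => vsub_mem_vectorSpan ℝ ⟨r.succ, by simp⟩ ⟨r.castSucc, rfl⟩) (by simp)

theorem normal_eq_smul_letter_add_smul_letter {X Y : ℕ → ℝ} (hX : ∀ m, X (m + 1) ≠ X m)
    (hY : ∀ m, Y (m + 1) ≠ Y m) (i : ℕ) :
    ∃ a b : ℝ, b ≠ 0 ∧
      normal k X Y ((i + 1) / 2) (i / 2) = a • letter k X Y i + b • letter k X Y (i + 1) := by
  by_cases hi : i % 2 = 0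
  · refine ⟨Y (i / 2 + 1) - Y (i / 2), -(X (i / 2 + 1) - X (i / 2)),
      neg_ne_zero.mpr (sub_ne_zero.mpr (hX _)), ?_⟩
    simp only [normal, letter, hi, show (i + 1) % 2 ≠ 0 by omega, show (i + 1) / 2 = i / 2 by omega,
      if_true, if_false]
    rw [neg_smul, ← sub_eq_add_neg]
  · refine ⟨-(X ((i + 1) / 2 + 1) - X ((i + 1) / 2)), Y (i / 2 + 1) - Y (i / 2),
      sub_ne_zero.mpr (hY _), ?_⟩
    simp only [normal, letter, hi, show (i + 1) % 2 = 0 by omega, if_true, if_false]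
    rw [neg_smul, neg_add_eq_sub]

theorem linearIndepOn_normal {X Y : ℕ → ℝ} (hX : ∀ m, X (m + 1) ≠ X m) (hY : ∀ m, Y (m + 1) ≠ Y m)
    (hletter : LinearIndepOn ℝ (letter k X Y) (Finset.range (k + 2) : Set ℕ)) :
    LinearIndepOn ℝ (fun i => normal k X Y ((i + 1) / 2) (i / 2)) (Finset.range (k + 1) : Set ℕ) :=
  linearIndepOn_range_of_bidiagonal hletter fun i _ => normal_eq_smul_letter_add_smul_letter hX hY i

def saw (n m : ℕ) : ℝ := (m % n : ℕ)

theorem saw_periodic (n : ℕ) : Function.Periodic (saw n) n := fun m => by simp [saw]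

theorem saw_sub_saw_succ {n : ℕ} (hn : 2 ≤ n) (m : ℕ) :
    saw n m - saw n (m + 1) = (if (m + 1) % n = 0 then (n : ℝ) else 0) - 1 := by
  have hlt := Nat.mod_lt m (by omega : 0 < n)
  have hsucc : (m + 1) % n = (m % n + 1) % n := by
    rw [Nat.add_mod, Nat.mod_eq_of_lt (by omega : 1 < n)]
  simp only [saw, hsucc]
  rcases Nat.lt_or_ge (m % n + 1) n with h | h
  · rw [Nat.mod_eq_of_lt h, if_neg (by omega)]
    push_cast; ring
  · rw [show m % n + 1 = n by omega, Nat.mod_self, if_pos rfl, Nat.cast_zero,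
      show m % n = n - 1 by omega, Nat.cast_sub (by omega)]
    push_cast; ring

theorem saw_succ_ne {n : ℕ} (hn : 2 ≤ n) (m : ℕ) : saw n (m + 1) ≠ saw n m := by
  intro h
  have := saw_sub_saw_succ hn m
  rw [h, sub_self] at this
  have hn' : (2 : ℝ) ≤ n := by exact_mod_cast hn
  split_ifs at this <;> linarith

variable (k)

def xSeq : ℕ → ℝ := saw (k + 2)

def ySeq (m : ℕ) : ℝ := saw (k + 2) (m + (k + 3) / 2)

def residue (p : ℕ) : ℕ := if p % 2 = 0 then p / 2 else p / 2 + (k + 3) / 2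

variable {k}

theorem letter_xSeq_ySeq_apply_succ_succ (p : ℕ) (t : Fin k) :
    letter k (xSeq k) (ySeq k) p t.succ.succ =
      (if (residue k p + t + 2) % (k + 2) = 0 then (k + 2 : ℝ) else 0) - 1 := by
  have key := fun m => saw_sub_saw_succ (by omega : 2 ≤ k + 2) m
  push_cast at key
  by_cases hp : p % 2 = 0
  · have := key (p / 2 + t + 1)
    rw [add_assoc _ 1 1] at this
    simpa [letter, residue, hp, xLetter, slopes, xSeq] using this
  · have := key (p / 2 + (k + 3) / 2 + t + 1)
    rw [add_assoc _ 1 1] at this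
    simpa [letter, residue, hp, yLetter, slopes, ySeq, add_right_comm _ _ ((k + 3) / 2)] using this

theorem letter_apply_zero (X Y : ℕ → ℝ) (p : ℕ) :
    letter k X Y p 0 = if p % 2 = 0 then 1 else 0 := by
  by_cases hp : p % 2 = 0 <;> simp [letter, xLetter, yLetter, hp]

theorem letter_apply_one (X Y : ℕ → ℝ) (p : ℕ) :
    letter k X Y p 1 = if p % 2 = 0 then 0 else 1 := by
  by_cases hp : p % 2 = 0 <;> simp [letter, xLetter, yLetter, hp]

theorem residue_le {p : ℕ} (hp : p < k + 2) : residue k p ≤ k + 1 := by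
  simp only [residue]; split_ifs <;> omega

theorem residue_injOn : Set.InjOn (residue k) (Finset.range (k + 2) : Set ℕ) := by
  intro p hp q hq h
  simp only [Finset.coe_range, Set.mem_Iio, residue] at hp hq h
  split_ifs at h <;> omega

theorem eq_zero_of_sum_smul_letter_eq_zero {g : ℕ → ℝ}
    (hg : ∑ p ∈ Finset.range (k + 2), g p • letter k (xSeq k) (ySeq k) p = 0)
    (hsum : ∑ p ∈ Finset.range (k + 2), g p = 0) {p : ℕ} (hp : p < k + 2)
    (hp1 : 1 ≤ residue k p) (hpk : residue k p ≤ k) : g p = 0 := by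
  -- Only the letter `p` has its spike at the coordinate `k - residue k p + 2`.
  have ht := congrFun hg (Fin.succ (Fin.succ ⟨k - residue k p, by omega⟩))
  simp only [Finset.sum_apply, Pi.smul_apply, smul_eq_mul, letter_xSeq_ySeq_apply_succ_succ,
    mul_sub, mul_one, Finset.sum_sub_distrib, hsum, sub_zero, mul_ite, mul_zero,
    Pi.zero_apply] at ht
  rw [Finset.sum_eq_single p, if_pos] at ht
  · simpa [show (k + 2 : ℝ) ≠ 0 by positivity] using ht
  · rw [show residue k p + (k - residue k p) + 2 = k + 2 by omega, Nat.mod_self]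
  · intro q hq hqp
    refine if_neg fun hmod => hqp (residue_injOn hq (by simpa using hp) ?_)
    have := residue_le (Finset.mem_range.mp hq)
    have := Nat.eq_of_dvd_of_lt_two_mul (by omega) (Nat.dvd_of_mod_eq_zero hmod) (by omega)
    omega
  · simp [hp]

theorem linearIndepOn_letter :
    LinearIndepOn ℝ (letter k (xSeq k) (ySeq k)) (Finset.range (k + 2) : Set ℕ) := by
  rw [linearIndepOn_finset_iff]
  intro g hg
  have h0 : ∑ p ∈ Finset.range (k + 2), (if p % 2 = 0 then g p else 0) = 0 := by
    simpa [letter_apply_zero] using congrFun hg 0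
  have h1 : ∑ p ∈ Finset.range (k + 2), (if p % 2 = 0 then 0 else g p) = 0 := by
    simpa [letter_apply_one] using congrFun hg 1
  have hsum : ∑ p ∈ Finset.range (k + 2), g p = 0 :=
    calc ∑ p ∈ Finset.range (k + 2), g p
        = ∑ p ∈ Finset.range (k + 2),
            ((if p % 2 = 0 then g p else 0) + if p % 2 = 0 then 0 else g p) :=
          Finset.sum_congr rfl fun p _ => by split_ifs <;> ring
      _ = 0 := by rw [Finset.sum_add_distrib, h0, h1, add_zero]
  intro p hp
  rw [Finset.mem_range] at hp
  by_cases hpv : 1 ≤ residue k p ∧ residue k p ≤ k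
  · exact eq_zero_of_sum_smul_letter_eq_zero hg hsum hp hpv.1 hpv.2
  -- The two letters of residue `0` and `n - 1` have different parities; the others vanish.
  have hothers : ∀ q ∈ Finset.range (k + 2), q ≠ p → q % 2 = p % 2 → g q = 0 := by
    intro q hq hqp hqpar
    rw [Finset.mem_range] at hq
    refine eq_zero_of_sum_smul_letter_eq_zero hg hsum hq ?_ ?_ <;>
      simp only [residue] at hpv ⊢ <;> split_ifs at hpv ⊢ <;> omega
  by_cases hpar : p % 2 = 0
  · rwa [Finset.sum_eq_single p (fun q hq hqp => ?_) (by simp [hp]), if_pos hpar] at h0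
    split_ifs with hq2
    · exact hothers q hq hqp (by omega)
    · rfl
  · rwa [Finset.sum_eq_single p (fun q hq hqp => ?_) (by simp [hp]), if_neg hpar] at h1
    split_ifs with hq2
    · rfl
    · exact hothers q hq hqp (by omega)

end AxisAlignedLifting

open AxisAlignedLifting in
/-- **Lemma (existence of a good parallel lifting).** For every `n ≥ 2` there exist an
axis-aligned `2n`-gon `P` and a parallel lifting `L(i,j) ∈ ℝⁿ` of the sequences
`A_i(j) = P(i + 2j)` (`0 ≤ i ≤ n-2`, `0 ≤ j ≤ n-1`) such that the affine spans
`|Ã_i| = affineSpan {L(i,0), …, L(i,n-1)}` are hyperplanes in general position: for every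
nonempty `S ⊆ {0, …, n-2}` the intersection `⋂_{i ∈ S} |Ã_i|` is a nonempty affine subspace
of dimension `n - |S|`. -/
theorem exists_good_parallel_lifting
    (n : ℕ) (hn : 2 ≤ n) :
    ∃ (P : ZMod (2 * n) → (Fin 2 → ℝ)) (L : ℕ → ℕ → (Fin n → ℝ)),
      IsAxisAligned2 n P ∧
      (∀ i ≤ n - 2, ∀ j ≤ n - 1,
        L i j ⟨0, by omega⟩ = P ((i + 2 * j : ℕ) : ZMod (2 * n)) 0 ∧
        L i j ⟨1, by omega⟩ = P ((i + 2 * j : ℕ) : ZMod (2 * n)) 1) ∧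
      (∀ i ≤ n - 2, ∀ i' ≤ n - 2, ∀ j ≤ n - 1, ∀ t : Fin n,
        2 ≤ (t : ℕ) → L i j t = L i' j t) ∧
      (∀ S : Finset ℕ, S ⊆ Finset.range (n - 1) → S.Nonempty →
        ((⨅ i ∈ S, affineSpan ℝ (Set.range fun j : Fin n => L i (j : ℕ)) :
            AffineSubspace ℝ (Fin n → ℝ)) : Set (Fin n → ℝ)).Nonempty ∧
        Module.finrank ℝ
          (⨅ i ∈ S, affineSpan ℝ (Set.range fun j : Fin n => L i (j : ℕ)) :
            AffineSubspace ℝ (Fin n → ℝ)).direction = n - S.card) := by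
  obtain ⟨k, rfl⟩ : ∃ k, n = k + 2 := ⟨n - 2, by omega⟩
  have hX : Function.Periodic (xSeq k) (k + 2) := saw_periodic _
  have hY : Function.Periodic (ySeq k) (k + 2) := (saw_periodic _).add_const _
  have hXstep : ∀ m, xSeq k (m + 1) ≠ xSeq k m := saw_succ_ne (by omega)
  have hYstep : ∀ m, ySeq k (m + 1) ≠ ySeq k m := fun m => by
    simpa [ySeq, add_right_comm] using saw_succ_ne (by omega : 2 ≤ k + 2) (m + (k + 3) / 2)
  refine ⟨polygon (k + 2) (xSeq k) (ySeq k),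
    fun i j => lift k (xSeq k) (ySeq k) ((i + 1) / 2) (i / 2) j, isAxisAligned2_polygon hX _,
    fun i _ j _ => ?_, fun i _ i' _ j _ t ht => ?_, fun S hS _ => ?_⟩
  · rw [polygon_natCast hX hY]
    exact ⟨congrArg (xSeq k) (by omega), congrArg (ySeq k) (by omega)⟩
  · cases t using Fin.cases with
    | zero => simp at ht
    | succ t => cases t using Fin.cases with
      | zero => simp at ht
      | succ t => simp [lift]
  · have hS' : (S : Set ℕ) ⊆ (Finset.range (k + 1) : Set ℕ) :=
      Finset.coe_subset.mpr (by simpa using hS)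
    have := nonempty_and_finrank_direction_biInf
      ((linearIndepOn_normal hXstep hYstep linearIndepOn_letter).mono hS')
      fun i _ => coe_affineSpan_lift (ySeq k) (i / 2) (hXstep ((i + 1) / 2))
    rwa [Fintype.card_fin] at this
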